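/- arXiv:1810.05377 — 7 statements merged into one kernel-verified Lean document; each statement's English description precedes it below -/
import Mathlib

section
/- Let p be an odd prime. For every real number α, the following two identities hold: (1/2)·[(1 + e^{ipα})·∏_{k=0}^{p−1}(e^{i(α + 2kπ/p)} + 1) + (1 − e^{ipα})·∏_{k=0}^{p−1}(e^{i(α + 2kπ/p)} − 1)] = 2e^{ipα}, and (−1/2)·[(1 − e^{ipα})·∏_{k=0}^{p−1}(e^{i(α + 2kπ/p)} + 1) + (1 + e^{ipα})·∏_{k=0}^{p−1}(e^{i(α + 2kπ/p)} − 1)] = 0. (This is the semantic content of the rewritten cyclotomic supplementarity rule SUP_p: the vector with these two entries equals (2e^{ipα}, 0).) -/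
/-!
With `z = e^{iα}` and `ζ = e^{2πi/p}`, the `k`-th factors are `z ζ^k ± 1`. Since `p` is odd and `ζ`
is a primitive `p`-th root of unity, `∏ₖ (z ζ^k + c) = z^p + c^p`, so the two products are
`e^{ipα} + 1` and `e^{ipα} - 1`, and both identities become polynomial identities in `e^{ipα}`.
-/

open Finset Polynomial

theorem IsPrimitiveRoot.prod_nthRootsFinset_one {R M : Type*} [CommRing R] [IsDomain R]
    [CommMonoid M] {ζ : R} {n : ℕ} (hζ : IsPrimitiveRoot ζ n) (f : R → M) :
    ∏ μ ∈ nthRootsFinset n (1 : R), f μ = ∏ k ∈ range n, f (ζ ^ k) := by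
  classical
  rw [nthRootsFinset_def, prod_eq_multiset_prod, Multiset.toFinset_val,
    hζ.nthRoots_one_nodup.dedup, hζ.nthRoots_eq (one_pow n), prod_eq_multiset_prod,
    Multiset.map_map, range_val]
  simp only [Function.comp_def, mul_one]

theorem IsPrimitiveRoot.prod_range_mul_pow_add {R : Type*} [CommRing R] [IsDomain R] {ζ : R}
    {n : ℕ} (hζ : IsPrimitiveRoot ζ n) (hn : Odd n) (z c : R) :
    ∏ k ∈ range n, (z * ζ ^ k + c) = z ^ n + c ^ n := by
  rw [add_comm (z ^ n), hζ.pow_add_pow_eq_prod_add_mul c z hn, hζ.prod_nthRootsFinset_one]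
  exact prod_congr rfl fun k _ => by ring

namespace Complex

theorem exp_I_mul_add_two_mul_pi_div (α : ℝ) (n k : ℕ) :
    exp (I * ((α : ℂ) + 2 * (k : ℂ) * (Real.pi : ℂ) / (n : ℂ))) =
      exp (I * α) * exp (2 * Real.pi * I / n) ^ k := by
  rw [← exp_nat_mul, ← exp_add]
  ring_nf

theorem prod_range_exp_I_mul_add_two_mul_pi_div_add {n : ℕ} (hn : Odd n) (α : ℝ) (c : ℂ) :
    ∏ k ∈ range n, (exp (I * ((α : ℂ) + 2 * (k : ℂ) * (Real.pi : ℂ) / (n : ℂ))) + c) =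
      exp (I * ((n : ℂ) * α)) + c ^ n := by
  simp_rw [exp_I_mul_add_two_mul_pi_div]
  rw [(isPrimitiveRoot_exp n hn.pos.ne').prod_range_mul_pow_add hn, ← exp_nat_mul]
  ring_nf

end Complex

theorem sup_rule_semantics_general (p : ℕ) (hodd : Odd p) (α : ℝ) :
    ((1 : ℂ) / 2 *
        ((1 + Complex.exp (Complex.I * ((p : ℂ) * (α : ℂ)))) *
            ∏ k ∈ Finset.range p,
              (Complex.exp (Complex.I * ((α : ℂ) + 2 * (k : ℂ) * (Real.pi : ℂ) / (p : ℂ))) + 1) +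
          (1 - Complex.exp (Complex.I * ((p : ℂ) * (α : ℂ)))) *
            ∏ k ∈ Finset.range p,
              (Complex.exp (Complex.I * ((α : ℂ) + 2 * (k : ℂ) * (Real.pi : ℂ) / (p : ℂ))) - 1)) =
      2 * Complex.exp (Complex.I * ((p : ℂ) * (α : ℂ)))) ∧
    ((-1 : ℂ) / 2 *
        ((1 - Complex.exp (Complex.I * ((p : ℂ) * (α : ℂ)))) *
            ∏ k ∈ Finset.range p,
              (Complex.exp (Complex.I * ((α : ℂ) + 2 * (k : ℂ) * (Real.pi : ℂ) / (p : ℂ))) + 1) +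
          (1 + Complex.exp (Complex.I * ((p : ℂ) * (α : ℂ)))) *
            ∏ k ∈ Finset.range p,
              (Complex.exp (Complex.I * ((α : ℂ) + 2 * (k : ℂ) * (Real.pi : ℂ) / (p : ℂ))) - 1)) =
      0) := by
  have hplus := Complex.prod_range_exp_I_mul_add_two_mul_pi_div_add hodd α 1
  have hminus := Complex.prod_range_exp_I_mul_add_two_mul_pi_div_add hodd α (-1)
  simp only [← sub_eq_add_neg, one_pow, hodd.neg_one_pow] at hplus hminus
  rw [hplus, hminus]
  constructor <;> ring

theorem sup_rule_semantics (p : ℕ) (hp : Nat.Prime p) (hodd : Odd p) (α : ℝ) :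
    ((1 : ℂ) / 2 *
        ((1 + Complex.exp (Complex.I * ((p : ℂ) * (α : ℂ)))) *
            ∏ k ∈ Finset.range p,
              (Complex.exp (Complex.I * ((α : ℂ) + 2 * (k : ℂ) * (Real.pi : ℂ) / (p : ℂ))) + 1) +
          (1 - Complex.exp (Complex.I * ((p : ℂ) * (α : ℂ)))) *
            ∏ k ∈ Finset.range p,
              (Complex.exp (Complex.I * ((α : ℂ) + 2 * (k : ℂ) * (Real.pi : ℂ) / (p : ℂ))) - 1)) =
      2 * Complex.exp (Complex.I * ((p : ℂ) * (α : ℂ)))) ∧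
    ((-1 : ℂ) / 2 *
        ((1 - Complex.exp (Complex.I * ((p : ℂ) * (α : ℂ)))) *
            ∏ k ∈ Finset.range p,
              (Complex.exp (Complex.I * ((α : ℂ) + 2 * (k : ℂ) * (Real.pi : ℂ) / (p : ℂ))) + 1) +
          (1 + Complex.exp (Complex.I * ((p : ℂ) * (α : ℂ)))) *
            ∏ k ∈ Finset.range p,
              (Complex.exp (Complex.I * ((α : ℂ) + 2 * (k : ℂ) * (Real.pi : ℂ) / (p : ℂ))) - 1)) =
      0) :=
  sup_rule_semantics_general p hodd α
end

section
/- Let α₁, α₂, β₁, β₂ be real numbers, and let M₁ be the 2×2 complex matrix (1/2)·[[e^{iα₂} + 1, (1 − e^{iα₂})e^{iα₁}], [1 − e^{iα₂}, (1 + e^{iα₂})e^{iα₁}]] (i.e., M₁ = X(α₂)·Z(α₁)) and M₂ the matrix (1/2)·[[e^{iβ₁} + 1, 1 − e^{iβ₁}], [(1 − e^{iβ₁})e^{iβ₂}, (1 + e^{iβ₁})e^{iβ₂}]] (i.e., M₂ = Z(β₂)·X(β₁)). If there exists a nonzero complex number λ with M₁ = λ·M₂, then either there exists an integer n such that α₁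 ≡ nπ (mod 2π), β₂ ≡ nπ (mod 2π), and β₁ ≡ (−1)^n·α₂ (mod 2π); or there exists an integer n such that α₂ ≡ nπ (mod 2π), β₁ ≡ nπ (mod 2π), and β₂ ≡ (−1)^n·α₁ (mod 2π). -/
/-- The green-node (Z) rotation matrix. -/
noncomputable def Zm (θ : ℝ) : Matrix (Fin 2) (Fin 2) ℂ :=
  !![1, 0; 0, Complex.exp (θ * Complex.I)]

/-- The red-node (X) rotation matrix. -/
noncomputable def Xm (θ : ℝ) : Matrix (Fin 2) (Fin 2) ℂ :=
  (1 / 2 : ℂ) •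
    !![1 + Complex.exp (θ * Complex.I), 1 - Complex.exp (θ * Complex.I);
       1 - Complex.exp (θ * Complex.I), 1 + Complex.exp (θ * Complex.I)]

/-- Congruence modulo `2π`. -/
def Cong (u v : ℝ) : Prop := ∃ k : ℤ, u - v = 2 * Real.pi * k

lemma cong_of_exp {u v : ℝ}
    (h : Complex.exp (u * Complex.I) = Complex.exp (v * Complex.I)) : Cong u v := by
  rw [Complex.exp_eq_exp_iff_exists_int] at h
  obtain ⟨n, hn⟩ := h
  refine ⟨n, ?_⟩
  have h2 : ((u - v : ℝ) : ℂ) = ((2 * Real.pi * n : ℝ) : ℂ) := by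
    push_cast
    linear_combination (-Complex.I) * hn + ((u:ℂ) - v - 2*(Real.pi:ℂ)*n) * Complex.I_sq
  exact_mod_cast h2

lemma cong_n0 {u : ℝ} (h : Complex.exp (u * Complex.I) = 1) :
    Cong u (((0:ℤ) : ℝ) * Real.pi) := by
  apply cong_of_exp
  rw [h]
  push_cast
  simp

lemma cong_n1 {u : ℝ} (h : Complex.exp (u * Complex.I) = -1) :
    Cong u (((1:ℤ) : ℝ) * Real.pi) := by
  apply cong_of_exp
  rw [h]
  push_cast
  rw [one_mul, Complex.exp_pi_mul_I]

lemma cong_p {u v : ℝ}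
    (h : Complex.exp (u * Complex.I) = Complex.exp (v * Complex.I)) :
    Cong u ((-1 : ℝ) ^ (0:ℤ) * v) := by
  have hv : ((-1 : ℝ) ^ (0:ℤ) * v) = v := by norm_num
  rw [hv]; exact cong_of_exp h

lemma cong_m {u v : ℝ}
    (h : Complex.exp (u * Complex.I) = (Complex.exp (v * Complex.I))⁻¹) :
    Cong u ((-1 : ℝ) ^ (1:ℤ) * v) := by
  have hv : ((-1 : ℝ) ^ (1:ℤ) * v) = -v := by norm_num
  rw [hv]
  apply cong_of_exp
  rw [h, show ((-v : ℝ) : ℂ) * Complex.I = -((v:ℝ) * Complex.I) by push_cast; ring,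
    Complex.exp_neg]

theorem euler_two_nodes (α₁ α₂ β₁ β₂ : ℝ)
    (M₁ : Matrix (Fin 2) (Fin 2) ℂ) (M₂ : Matrix (Fin 2) (Fin 2) ℂ)
    (hM₁ : M₁ = (1 / 2 : ℂ) •
      !![Complex.exp (α₂ * Complex.I) + 1,
           (1 - Complex.exp (α₂ * Complex.I)) * Complex.exp (α₁ * Complex.I);
         1 - Complex.exp (α₂ * Complex.I),
           (1 + Complex.exp (α₂ * Complex.I)) * Complex.exp (α₁ * Complex.I)])
    (hM₂ : M₂ = (1 / 2 : ℂ) •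
      !![Complex.exp (β₁ * Complex.I) + 1,
           1 - Complex.exp (β₁ * Complex.I);
         (1 - Complex.exp (β₁ * Complex.I)) * Complex.exp (β₂ * Complex.I),
           (1 + Complex.exp (β₁ * Complex.I)) * Complex.exp (β₂ * Complex.I)])
    (h : ∃ lam : ℂ, lam ≠ 0 ∧ M₁ = lam • M₂) :
    (∃ n : ℤ, Cong α₁ (n * Real.pi) ∧ Cong β₂ (n * Real.pi) ∧ Cong β₁ ((-1) ^ n * α₂)) ∨
    (∃ n : ℤ, Cong α₂ (n * Real.pi) ∧ Cong β₁ (n * Real.pi) ∧ Cong β₂ ((-1) ^ n * α₁)) := by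
  obtain ⟨lam, hl, hM⟩ := h
  rw [hM₁, hM₂] at hM
  have e00 := congrFun (congrFun hM 0) 0
  have e01 := congrFun (congrFun hM 0) 1
  have e10 := congrFun (congrFun hM 1) 0
  have e11 := congrFun (congrFun hM 1) 1
  simp only [Matrix.smul_apply, Matrix.cons_val', Matrix.cons_val_zero, Matrix.cons_val_one,
    Matrix.head_cons, Matrix.head_fin_const, Matrix.empty_val', Matrix.cons_val_fin_one,
    Matrix.of_apply, smul_eq_mul] at e00 e01 e10 e11
  set A := Complex.exp (α₁ * Complex.I) with hAdef
  set B := Complex.exp (α₂ * Complex.I) with hBdef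
  set C := Complex.exp (β₁ * Complex.I) with hCdef
  set D := Complex.exp (β₂ * Complex.I) with hDdef
  have hA0 : A ≠ 0 := Complex.exp_ne_zero _
  have E1 : B + 1 = lam * (C + 1) := by linear_combination 2 * e00
  have E2 : (1 - B) * A = lam * (1 - C) := by linear_combination 2 * e01
  have E3 : 1 - B = lam * ((1 - C) * D) := by linear_combination 2 * e10
  have E4 : (1 + B) * A = lam * ((1 + C) * D) := by linear_combination 2 * e11
  by_cases hc1 : C = 1
  · -- C = 1 forces B = 1, lam = 1, D = A
    have h0 : (1 - B) * A = 0 := by rw [hc1] at E2; linear_combination E2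
    have hB : B = 1 := by
      rcases mul_eq_zero.mp h0 with h' | h'
      · linear_combination -h'
      · exact absurd h' hA0
    have hlam : lam = 1 := by
      rw [hc1, hB] at E1; linear_combination (-1/2 : ℂ) * E1
    have hDA : D = A := by
      rw [hc1, hB, hlam] at E4; linear_combination (-1/2 : ℂ) * E4
    exact Or.inr ⟨0, cong_n0 hB, cong_n0 hc1, cong_p hDA⟩
  · by_cases hcm1 : C = -1
    · -- C = -1 forces B = -1, lam = A, D = A⁻¹
      have hB : B = -1 := by rw [hcm1] at E1; linear_combination E1
      have hlam : lam = A := by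
        rw [hcm1, hB] at E2; linear_combination (-1/2 : ℂ) * E2
      have hAD : D * A = 1 := by
        rw [hcm1, hlam] at E3; rw [hB] at E3; linear_combination (-1/2 : ℂ) * E3
      have hD : D = A⁻¹ := eq_inv_of_mul_eq_one_left hAD
      exact Or.inr ⟨1, cong_n1 hB, cong_n1 hcm1, cong_m hD⟩
    · -- C ≠ ±1 : then A = D and A * D = 1, so A = ±1
      have h1C : (1:ℂ) - C ≠ 0 := sub_ne_zero.mpr (Ne.symm hc1)
      have hC1 : C + 1 ≠ 0 := by
        intro h'; exact hcm1 (by linear_combination h')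
      have hBm1 : B + 1 ≠ 0 := by
        rw [E1]; exact mul_ne_zero hl hC1
      have hB1 : (1:ℂ) - B ≠ 0 := by
        intro h'
        have : lam * (1 - C) = 0 := by rw [← E2]; linear_combination A * h'
        exact (mul_ne_zero hl h1C) this
      have hADeq : A = D := by
        have h' : (B + 1) * (A - D) = 0 := by linear_combination E4 - D * E1
        rcases mul_eq_zero.mp h' with h'' | h''
        · exact absurd h'' hBm1
        · linear_combination h''
      have hAD1 : A * D = 1 := by
        have h' : (1 - B) * (A * D - 1) = 0 := by linear_combination D * E2 - E3
        rcases mul_eq_zero.mp h' with h'' | h''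
        · exact absurd h'' hB1
        · linear_combination h''
      have hA2 : (A - 1) * (A + 1) = 0 := by
        linear_combination hAD1 + A * hADeq
      rcases mul_eq_zero.mp hA2 with hA | hA
      · -- A = 1
        have hA' : A = 1 := by linear_combination hA
        have hD' : D = 1 := by rw [← hADeq]; exact hA'
        have hlam : lam = 1 := by
          linear_combination (-1/2 : ℂ) * E1 - (1/2 : ℂ) * E2 + ((1 - B)/2) * hA'
        have hCB : C = B := by rw [hlam] at E1; linear_combination -E1
        exact Or.inl ⟨0, cong_n0 hA', cong_n0 hD', cong_p hCB⟩
      · -- A = -1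
        have hA' : A = -1 := by linear_combination hA
        have hD' : D = -1 := by rw [← hADeq]; exact hA'
        have hlam : lam = B := by
          linear_combination (-1/2 : ℂ) * E1 - (1/2 : ℂ) * E2 + ((1 - B)/2) * hA'
        have hCB : C * B = 1 := by rw [hlam] at E1; linear_combination -E1
        have hC' : C = B⁻¹ := eq_inv_of_mul_eq_one_left hCB
        exact Or.inl ⟨1, cong_n1 hA', cong_n1 hD', cong_m hC'⟩
end

section
/- For all real numbers a, b and all integers n, m, there exists a nonzero complex number λ such that Z((m + n)π)·X((−1)^n·a)·Z(nπ) = λ·X((−1)^m·b)·Z(mπ)·X(a − b). -/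
set_option maxHeartbeats 1000000

private lemma Zm_eq (θ : ℝ) (c : ℂ) (h : Complex.exp ((θ : ℂ) * Complex.I) = c) :
    Zm θ = !![1, 0; 0, c] := by
  simp only [Zm, h]

private lemma Xm_eq (θ : ℝ) (c : ℂ) (h : Complex.exp ((θ : ℂ) * Complex.I) = c) :
    Xm θ = (1 / 2 : ℂ) • !![1 + c, 1 - c; 1 - c, 1 + c] := by
  simp only [Xm, h]

private lemma expk (k : ℤ) :
    Complex.exp (((k : ℝ) * Real.pi : ℝ) * Complex.I) = (-1 : ℂ) ^ k := by
  push_cast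
  rw [mul_assoc, Complex.exp_int_mul, Complex.exp_pi_mul_I]

theorem euler_eq_two (a b : ℝ) (n m : ℤ) :
    ∃ lam : ℂ, lam ≠ 0 ∧
      Zm ((m + n) * Real.pi) * Xm ((-1) ^ n * a) * Zm (n * Real.pi) =
        lam • (Xm ((-1) ^ m * b) * Zm (m * Real.pi) * Xm (a - b)) := by
  set ea := Complex.exp ((a : ℂ) * Complex.I) with hea_def
  set eb := Complex.exp ((b : ℂ) * Complex.I) with heb_def
  have hea : ea ≠ 0 := Complex.exp_ne_zero _
  have heb : eb ≠ 0 := Complex.exp_ne_zero _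
  have hmn : Complex.exp (((((m : ℝ) + (n : ℝ)) * Real.pi : ℝ) : ℂ) * Complex.I)
      = (-1 : ℂ) ^ m * (-1 : ℂ) ^ n := by
    rw [show ((m : ℝ) + (n : ℝ)) = ((m + n : ℤ) : ℝ) by push_cast; ring, expk,
      zpow_add₀ (by norm_num : (-1 : ℂ) ≠ 0)]
  have hC : Xm (a - b) = (1 / 2 : ℂ) •
      !![1 + ea * eb⁻¹, 1 - ea * eb⁻¹; 1 - ea * eb⁻¹, 1 + ea * eb⁻¹] := by
    refine Xm_eq _ _ ?_
    rw [Complex.ofReal_sub, sub_mul, Complex.exp_sub, div_eq_mul_inv, hea_def, heb_def]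
  rcases Int.even_or_odd n with hn | hn <;> rcases Int.even_or_odd m with hm | hm
  · have hZn : Zm ((n : ℝ) * Real.pi) = !![1, 0; 0, 1] :=
      Zm_eq _ _ (by rw [expk, hn.neg_one_zpow])
    have hZmn : Zm (((m : ℝ) + (n : ℝ)) * Real.pi) = !![1, 0; 0, 1] :=
      Zm_eq _ _ (by rw [hmn, hn.neg_one_zpow, hm.neg_one_zpow, one_mul])
    have hZm : Zm ((m : ℝ) * Real.pi) = !![1, 0; 0, 1] :=
      Zm_eq _ _ (by rw [expk, hm.neg_one_zpow])
    have hXa : Xm ((-1) ^ n * a) = (1 / 2 : ℂ) • !![1 + ea, 1 - ea; 1 - ea, 1 + ea] :=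
      Xm_eq _ _ (by rw [hn.neg_one_zpow, one_mul, hea_def])
    have hXb : Xm ((-1) ^ m * b) = (1 / 2 : ℂ) • !![1 + eb, 1 - eb; 1 - eb, 1 + eb] :=
      Xm_eq _ _ (by rw [hm.neg_one_zpow, one_mul, heb_def])
    refine ⟨1, one_ne_zero, ?_⟩
    rw [hZn, hZmn, hZm, hXa, hXb, hC]
    ext i j
    fin_cases i <;> fin_cases j <;>
      simp [Matrix.mul_apply, Fin.sum_univ_two] <;> field_simp <;> ring
  · have hZn : Zm ((n : ℝ) * Real.pi) = !![1, 0; 0, 1] :=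
      Zm_eq _ _ (by rw [expk, hn.neg_one_zpow])
    have hZmn : Zm (((m : ℝ) + (n : ℝ)) * Real.pi) = !![1, 0; 0, -1] :=
      Zm_eq _ _ (by rw [hmn, hn.neg_one_zpow, hm.neg_one_zpow, mul_one])
    have hZm : Zm ((m : ℝ) * Real.pi) = !![1, 0; 0, -1] :=
      Zm_eq _ _ (by rw [expk, hm.neg_one_zpow])
    have hXa : Xm ((-1) ^ n * a) = (1 / 2 : ℂ) • !![1 + ea, 1 - ea; 1 - ea, 1 + ea] :=
      Xm_eq _ _ (by rw [hn.neg_one_zpow, one_mul, hea_def])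
    have hXb : Xm ((-1) ^ m * b) =
        (1 / 2 : ℂ) • !![1 + eb⁻¹, 1 - eb⁻¹; 1 - eb⁻¹, 1 + eb⁻¹] :=
      Xm_eq _ _ (by
        rw [hm.neg_one_zpow, neg_one_mul, Complex.ofReal_neg, neg_mul,
          Complex.exp_neg, heb_def])
    refine ⟨eb, heb, ?_⟩
    rw [hZn, hZmn, hZm, hXa, hXb, hC]
    ext i j
    fin_cases i <;> fin_cases j <;>
      simp [Matrix.mul_apply, Fin.sum_univ_two] <;> field_simp <;> ring
  · have hZn : Zm ((n : ℝ) * Real.pi) = !![1, 0; 0, -1] :=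
      Zm_eq _ _ (by rw [expk, hn.neg_one_zpow])
    have hZmn : Zm (((m : ℝ) + (n : ℝ)) * Real.pi) = !![1, 0; 0, -1] :=
      Zm_eq _ _ (by rw [hmn, hn.neg_one_zpow, hm.neg_one_zpow, one_mul])
    have hZm : Zm ((m : ℝ) * Real.pi) = !![1, 0; 0, 1] :=
      Zm_eq _ _ (by rw [expk, hm.neg_one_zpow])
    have hXa : Xm ((-1) ^ n * a) =
        (1 / 2 : ℂ) • !![1 + ea⁻¹, 1 - ea⁻¹; 1 - ea⁻¹, 1 + ea⁻¹] :=
      Xm_eq _ _ (by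
        rw [hn.neg_one_zpow, neg_one_mul, Complex.ofReal_neg, neg_mul,
          Complex.exp_neg, hea_def])
    have hXb : Xm ((-1) ^ m * b) = (1 / 2 : ℂ) • !![1 + eb, 1 - eb; 1 - eb, 1 + eb] :=
      Xm_eq _ _ (by rw [hm.neg_one_zpow, one_mul, heb_def])
    refine ⟨ea⁻¹, inv_ne_zero hea, ?_⟩
    rw [hZn, hZmn, hZm, hXa, hXb, hC]
    ext i j
    fin_cases i <;> fin_cases j <;>
      simp [Matrix.mul_apply, Fin.sum_univ_two] <;> field_simp <;> ring
  · have hZn : Zm ((n : ℝ) * Real.pi) = !![1, 0; 0, -1] :=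
      Zm_eq _ _ (by rw [expk, hn.neg_one_zpow])
    have hZmn : Zm (((m : ℝ) + (n : ℝ)) * Real.pi) = !![1, 0; 0, 1] :=
      Zm_eq _ _ (by rw [hmn, hn.neg_one_zpow, hm.neg_one_zpow]; norm_num)
    have hZm : Zm ((m : ℝ) * Real.pi) = !![1, 0; 0, -1] :=
      Zm_eq _ _ (by rw [expk, hm.neg_one_zpow])
    have hXa : Xm ((-1) ^ n * a) =
        (1 / 2 : ℂ) • !![1 + ea⁻¹, 1 - ea⁻¹; 1 - ea⁻¹, 1 + ea⁻¹] :=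
      Xm_eq _ _ (by
        rw [hn.neg_one_zpow, neg_one_mul, Complex.ofReal_neg, neg_mul,
          Complex.exp_neg, hea_def])
    have hXb : Xm ((-1) ^ m * b) =
        (1 / 2 : ℂ) • !![1 + eb⁻¹, 1 - eb⁻¹; 1 - eb⁻¹, 1 + eb⁻¹] :=
      Xm_eq _ _ (by
        rw [hm.neg_one_zpow, neg_one_mul, Complex.ofReal_neg, neg_mul,
          Complex.exp_neg, heb_def])
    refine ⟨ea⁻¹ * eb, mul_ne_zero (inv_ne_zero hea) heb, ?_⟩
    rw [hZn, hZmn, hZm, hXa, hXb, hC]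
    ext i j
    fin_cases i <;> fin_cases j <;>
      simp [Matrix.mul_apply, Fin.sum_univ_two] <;> field_simp <;> ring
end

section
/- For every real number b and all integers n, m, there exists a nonzero complex number λ such that Z(nπ + π/2)·X(nπ + π/2)·Z(nπ + b) = λ·X(mπ + b)·Z(mπ + π/2)·X(mπ + π/2). -/
lemma exp_shift (c : ℝ) (n : ℤ) :
    Complex.exp ((((n : ℝ) * Real.pi + c : ℝ) : ℂ) * Complex.I)
      = (-1) ^ n * Complex.exp ((c : ℂ) * Complex.I) := by
  push_cast
  rw [add_mul, Complex.exp_add, mul_assoc, Complex.exp_int_mul, Complex.exp_pi_mul_I]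

lemma I_pow_three : Complex.I ^ 3 = -Complex.I := by
  rw [(by norm_num : (3:ℕ) = 2 + 1), pow_succ, Complex.I_sq]; ring

set_option maxHeartbeats 1000000 in
lemma key_matrix (e ε μ : ℂ) (hε : ε = 1 ∨ ε = -1) (hμ : μ = 1 ∨ μ = -1) :
    !![1, 0; 0, ε * Complex.I] *
        ((1 / 2 : ℂ) • !![1 + ε * Complex.I, 1 - ε * Complex.I;
            1 - ε * Complex.I, 1 + ε * Complex.I]) *
        !![1, 0; 0, ε * e]
      = ((1 + ε * μ) / 2 + (1 - ε * μ) / 2 * ε * Complex.I) •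
          (((1 / 2 : ℂ) • !![1 + μ * e, 1 - μ * e; 1 - μ * e, 1 + μ * e]) *
            !![1, 0; 0, μ * Complex.I] *
            ((1 / 2 : ℂ) • !![1 + μ * Complex.I, 1 - μ * Complex.I;
                1 - μ * Complex.I, 1 + μ * Complex.I])) := by
  rcases hε with rfl | rfl <;> rcases hμ with rfl | rfl <;>
    · ext a c
      fin_cases a <;> fin_cases c <;>
        · simp [Matrix.mul_apply, Fin.sum_univ_succ]
          ring_nf
          try simp [Complex.I_sq, I_pow_three]
          try ring_nf

theorem euler_eq_four (b : ℝ) (n m : ℤ) :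
    ∃ lam : ℂ, lam ≠ 0 ∧
      Zm (n * Real.pi + Real.pi / 2) * Xm (n * Real.pi + Real.pi / 2) * Zm (n * Real.pi + b) =
        lam • (Xm (m * Real.pi + b) * Zm (m * Real.pi + Real.pi / 2) *
          Xm (m * Real.pi + Real.pi / 2)) := by
  have hhalf : Complex.exp (((Real.pi / 2 : ℝ) : ℂ) * Complex.I) = Complex.I := by
    norm_num [Complex.exp_mul_I]
  obtain ⟨ε, hεdef⟩ : ∃ ε : ℂ, ε = (-1) ^ n := ⟨_, rfl⟩
  obtain ⟨μ, hμdef⟩ : ∃ μ : ℂ, μ = (-1) ^ m := ⟨_, rfl⟩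
  have hε : ε = 1 ∨ ε = -1 := by
    rw [hεdef]
    rcases Int.even_or_odd n with h | h
    · exact Or.inl h.neg_one_zpow
    · exact Or.inr h.neg_one_zpow
  have hμ : μ = 1 ∨ μ = -1 := by
    rw [hμdef]
    rcases Int.even_or_odd m with h | h
    · exact Or.inl h.neg_one_zpow
    · exact Or.inr h.neg_one_zpow
  refine ⟨(1 + ε * μ) / 2 + (1 - ε * μ) / 2 * ε * Complex.I, ?_, ?_⟩
  · rcases hε with rfl | rfl <;> rcases hμ with rfl | rfl <;>
      norm_num [Complex.I_ne_zero]
  · have hZ1 : Zm (n * Real.pi + Real.pi / 2) = !![1, 0; 0, ε * Complex.I] := by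
      rw [Zm, exp_shift, hhalf, ← hεdef]
    have hX1 : Xm (n * Real.pi + Real.pi / 2)
        = (1 / 2 : ℂ) • !![1 + ε * Complex.I, 1 - ε * Complex.I;
            1 - ε * Complex.I, 1 + ε * Complex.I] := by
      rw [Xm, exp_shift, hhalf, ← hεdef]
    have hZ2 : Zm (n * Real.pi + b) = !![1, 0; 0, ε * Complex.exp ((b : ℂ) * Complex.I)] := by
      rw [Zm, exp_shift, ← hεdef]
    have hX2 : Xm (m * Real.pi + b)
        = (1 / 2 : ℂ) • !![1 + μ * Complex.exp ((b : ℂ) * Complex.I),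
            1 - μ * Complex.exp ((b : ℂ) * Complex.I);
            1 - μ * Complex.exp ((b : ℂ) * Complex.I),
            1 + μ * Complex.exp ((b : ℂ) * Complex.I)] := by
      rw [Xm, exp_shift, ← hμdef]
    have hZ3 : Zm (m * Real.pi + Real.pi / 2) = !![1, 0; 0, μ * Complex.I] := by
      rw [Zm, exp_shift, hhalf, ← hμdef]
    have hX3 : Xm (m * Real.pi + Real.pi / 2)
        = (1 / 2 : ℂ) • !![1 + μ * Complex.I, 1 - μ * Complex.I;
            1 - μ * Complex.I, 1 + μ * Complex.I] := by
      rw [Xm, exp_shift, hhalf, ← hμdef]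
    rw [hZ1, hX1, hZ2, hX2, hZ3, hX3]
    exact key_matrix _ _ _ hε hμ
end

section
/- For every real number b and all integers n, m, there exists a nonzero complex number λ such that Z(nπ − π/2)·X(nπ + π/2)·Z(nπ + b) = λ·X(mπ − b)·Z(mπ − π/2)·X(mπ + π/2). -/
set_option maxHeartbeats 4000000 in
theorem euler_eq_five (b : ℝ) (n m : ℤ) :
    ∃ lam : ℂ, lam ≠ 0 ∧
      Zm (n * Real.pi - Real.pi / 2) * Xm (n * Real.pi + Real.pi / 2) * Zm (n * Real.pi + b) =
        lam • (Xm (m * Real.pi - b) * Zm (m * Real.pi - Real.pi / 2) *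
          Xm (m * Real.pi + Real.pi / 2)) := by
  have hadd : ∀ s t : ℝ, Complex.exp (((s + t : ℝ) : ℂ) * Complex.I)
      = Complex.exp ((s : ℂ) * Complex.I) * Complex.exp ((t : ℂ) * Complex.I) := by
    intro s t
    push_cast
    rw [add_mul, Complex.exp_add]
  have hI2 : Complex.exp (((Real.pi / 2 : ℝ) : ℂ) * Complex.I) = Complex.I := by
    rw [Complex.exp_mul_I, ← Complex.ofReal_cos, ← Complex.ofReal_sin,
      Real.cos_pi_div_two, Real.sin_pi_div_two]
    simp
  have hI2' : Complex.exp (((-(Real.pi / 2) : ℝ) : ℂ) * Complex.I) = -Complex.I := by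
    have : ((-(Real.pi / 2) : ℝ) : ℂ) * Complex.I = -(((Real.pi / 2 : ℝ) : ℂ) * Complex.I) := by
      push_cast; ring
    rw [this, Complex.exp_neg, hI2, Complex.inv_I]
  have hpm : ∀ k : ℤ, Complex.exp (((k : ℝ) * Real.pi : ℝ) * Complex.I) = 1 ∨
      Complex.exp (((k : ℝ) * Real.pi : ℝ) * Complex.I) = -1 := by
    intro k
    rcases Int.even_or_odd k with ⟨a, ha⟩ | ⟨a, ha⟩
    · left
      subst ha
      push_cast
      rw [show ((a : ℂ) + a) * Real.pi * Complex.I = a * (2 * Real.pi * Complex.I) by ring]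
      exact Complex.exp_int_mul_two_pi_mul_I a
    · right
      subst ha
      push_cast
      rw [show ((2 * a : ℂ) + 1) * Real.pi * Complex.I
          = a * (2 * Real.pi * Complex.I) + Real.pi * Complex.I by ring,
        Complex.exp_add, Complex.exp_int_mul_two_pi_mul_I, Complex.exp_pi_mul_I]
      simp
  set ε := Complex.exp (((n : ℝ) * Real.pi : ℝ) * Complex.I) with hε
  set δ := Complex.exp (((m : ℝ) * Real.pi : ℝ) * Complex.I) with hδ
  set c := Complex.exp ((b : ℂ) * Complex.I) with hc
  have hcne : c ≠ 0 := Complex.exp_ne_zero _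
  have hI3 : Complex.I ^ 3 = -Complex.I := by
    rw [pow_succ, Complex.I_sq]; ring
  have hI4 : Complex.I ^ 4 = 1 := by
    rw [show (4 : ℕ) = 3 + 1 from rfl, pow_succ, hI3, neg_mul, Complex.I_mul_I]; ring
  have hbneg : Complex.exp (((-b : ℝ) : ℂ) * Complex.I) = c⁻¹ := by
    rw [hc, ← Complex.exp_neg]
    push_cast
    ring_nf
  have e1 : Complex.exp ((((n : ℝ) * Real.pi - Real.pi / 2 : ℝ) : ℂ) * Complex.I)
      = ε * (-Complex.I) := by
    rw [show (n : ℝ) * Real.pi - Real.pi / 2 = (n : ℝ) * Real.pi + (-(Real.pi / 2)) by ring,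
      hadd, hI2']
  have e2 : Complex.exp ((((n : ℝ) * Real.pi + Real.pi / 2 : ℝ) : ℂ) * Complex.I)
      = ε * Complex.I := by rw [hadd, hI2]
  have e3 : Complex.exp ((((n : ℝ) * Real.pi + b : ℝ) : ℂ) * Complex.I) = ε * c := by
    rw [hadd]
  have e4 : Complex.exp ((((m : ℝ) * Real.pi - b : ℝ) : ℂ) * Complex.I) = δ * c⁻¹ := by
    rw [show (m : ℝ) * Real.pi - b = (m : ℝ) * Real.pi + (-b) by ring, hadd, hbneg]
  have e5 : Complex.exp ((((m : ℝ) * Real.pi - Real.pi / 2 : ℝ) : ℂ) * Complex.I)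
      = δ * (-Complex.I) := by
    rw [show (m : ℝ) * Real.pi - Real.pi / 2 = (m : ℝ) * Real.pi + (-(Real.pi / 2)) by ring,
      hadd, hI2']
  have e6 : Complex.exp ((((m : ℝ) * Real.pi + Real.pi / 2 : ℝ) : ℂ) * Complex.I)
      = δ * Complex.I := by rw [hadd, hI2]
  refine ⟨c * (1 + ε * Complex.I) * (δ - Complex.I) / 2, ?_, ?_⟩
  · rcases hpm n with h1 | h1 <;> rcases hpm m with h2 | h2 <;>
      rw [← hε] at h1 <;> rw [← hδ] at h2 <;> rw [h1, h2] <;>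
      refine div_ne_zero (mul_ne_zero (mul_ne_zero hcne ?_) ?_) two_ne_zero <;>
      norm_num [Complex.ext_iff]
  · unfold Zm Xm
    rw [e1, e2, e3, e4, e5, e6]
    rcases hpm n with h1 | h1 <;> rcases hpm m with h2 | h2 <;>
      rw [← hε] at h1 <;> rw [← hδ] at h2 <;> rw [h1, h2] <;>
      ext i j <;> fin_cases i <;> fin_cases j <;>
      simp [Matrix.mul_apply, Fin.sum_univ_two, Matrix.smul_apply] <;>
      field_simp <;> ring_nf <;> simp only [Complex.I_sq, hI3, hI4] <;> ring_nf
end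

section
/- For every real number b and all integers n, m, there exists a nonzero complex number λ such that Z(nπ + π/2)·X(nπ + b)·Z(mπ − π/2) = λ·X(nπ − π/2)·Z(mπ + b)·X(mπ + π/2). -/
theorem euler_eq_six (b : ℝ) (n m : ℤ) :
    ∃ lam : ℂ, lam ≠ 0 ∧
      Zm (n * Real.pi + Real.pi / 2) * Xm (n * Real.pi + b) * Zm (m * Real.pi - Real.pi / 2) =
        lam • (Xm (n * Real.pi - Real.pi / 2) * Zm (m * Real.pi + b) *
          Xm (m * Real.pi + Real.pi / 2)) := by
  set s : ℂ := Complex.exp (((n : ℝ) * Real.pi : ℝ) * Complex.I) with hs_def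
  set t : ℂ := Complex.exp (((m : ℝ) * Real.pi : ℝ) * Complex.I) with ht_def
  set E : ℂ := Complex.exp ((b : ℝ) * Complex.I) with hE_def
  have hI : Complex.I * Complex.I = -1 := Complex.I_mul_I
  have sq : ∀ k : ℤ, Complex.exp (((k : ℝ) * Real.pi : ℝ) * Complex.I) *
      Complex.exp (((k : ℝ) * Real.pi : ℝ) * Complex.I) = 1 := by
    intro k
    rw [← Complex.exp_add]
    have : ((((k : ℝ) * Real.pi : ℝ) : ℂ) * Complex.I + (((k : ℝ) * Real.pi : ℝ) : ℂ) * Complex.I)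
        = k * (2 * Real.pi * Complex.I) := by push_cast; ring
    rw [this, Complex.exp_int_mul_two_pi_mul_I]
  have hs : s * s = 1 := sq n
  have ht : t * t = 1 := sq m
  have split : ∀ (k : ℤ) (x : ℝ), Complex.exp ((((k : ℝ) * Real.pi + x : ℝ) : ℂ) * Complex.I)
      = Complex.exp (((k : ℝ) * Real.pi : ℝ) * Complex.I) * Complex.exp ((x : ℂ) * Complex.I) := by
    intro k x
    rw [← Complex.exp_add]; push_cast; ring_nf
  have ehalf : Complex.exp (((Real.pi / 2 : ℝ) : ℂ) * Complex.I) = Complex.I := by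
    rw [Complex.exp_mul_I]; push_cast; simp
  have emhalf : Complex.exp (((-(Real.pi / 2) : ℝ) : ℂ) * Complex.I) = -Complex.I := by
    rw [Complex.exp_mul_I]; push_cast; simp
  have cast1 : ∀ (k : ℤ) (x : ℝ), ((k:ℂ) * (Real.pi:ℂ) + (x:ℂ)) = (((k : ℝ) * Real.pi + x : ℝ) : ℂ) := by
    intro k x; push_cast; ring
  have cast2 : ∀ (k : ℤ), ((k:ℂ) * (Real.pi:ℂ) - (Real.pi:ℂ)/2) = (((k : ℝ) * Real.pi - Real.pi/2 : ℝ) : ℂ) := by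
    intro k; push_cast; ring
  have cast3 : ∀ (k : ℤ), ((k:ℂ) * (Real.pi:ℂ) + (Real.pi:ℂ)/2) = (((k : ℝ) * Real.pi + Real.pi/2 : ℝ) : ℂ) := by
    intro k; push_cast; ring
  have h1 : Complex.exp (((n:ℂ) * (Real.pi:ℂ) + (Real.pi:ℂ)/2) * Complex.I) = s * Complex.I := by
    rw [cast3, split n (Real.pi / 2), ehalf]
  have h2 : Complex.exp (((n:ℂ) * (Real.pi:ℂ) + (b:ℂ)) * Complex.I) = s * E := by
    rw [cast1, split n b]
  have h3 : Complex.exp (((m:ℂ) * (Real.pi:ℂ) - (Real.pi:ℂ)/2) * Complex.I) = t * -Complex.I := by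
    rw [cast2, show ((m : ℝ) * Real.pi - Real.pi / 2 : ℝ) = ((m : ℝ) * Real.pi + -(Real.pi / 2) : ℝ) by ring,
      split m (-(Real.pi / 2)), emhalf]
  have h4 : Complex.exp (((n:ℂ) * (Real.pi:ℂ) - (Real.pi:ℂ)/2) * Complex.I) = s * -Complex.I := by
    rw [cast2, show ((n : ℝ) * Real.pi - Real.pi / 2 : ℝ) = ((n : ℝ) * Real.pi + -(Real.pi / 2) : ℝ) by ring,
      split n (-(Real.pi / 2)), emhalf]
  have h5 : Complex.exp (((m:ℂ) * (Real.pi:ℂ) + (b:ℂ)) * Complex.I) = t * E := by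
    rw [cast1, split m b]
  have h6 : Complex.exp (((m:ℂ) * (Real.pi:ℂ) + (Real.pi:ℂ)/2) * Complex.I) = t * Complex.I := by
    rw [cast3, split m (Real.pi / 2), ehalf]
  refine ⟨(1 + s * t) / 2 - Complex.I * t * (1 - s * t) / 2, ?_, ?_⟩
  · have key : ((1 + s * t) / 2 - Complex.I * t * (1 - s * t) / 2) *
        ((1 + s * t) / 2 + Complex.I * t * (1 - s * t) / 2) = 1 := by
      linear_combination ((1/4 : ℂ)*t*t + (-1/4 : ℂ)*t*t*t*t*Complex.I*Complex.I) * hs + ((1/4 : ℂ) + (-1/2 : ℂ)*Complex.I*Complex.I + (-1/4 : ℂ)*t*t*Complex.I*Complex.I + (1/2 : ℂ)*s*t*Complex.I*Complex.I) * ht + ((-1/2 : ℂ) + (1/2 : ℂ)*s*t) * hI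
    exact left_ne_zero_of_mul_eq_one key
  · ext i j
    fin_cases i <;> fin_cases j <;>
      simp [Zm, Xm, Matrix.mul_apply, Fin.sum_univ_two, h1, h2, h3, h4, h5, h6] 
    · linear_combination ((1/8 : ℂ)*t*Complex.I + (1/4 : ℂ)*t*t*Complex.I*Complex.I + (-1/8 : ℂ)*t*t*E*Complex.I + (1/8 : ℂ)*t*t*t*Complex.I*Complex.I*Complex.I + (1/8 : ℂ)*t*t*t*t*E*Complex.I*Complex.I*Complex.I) * hs + ((3/8 : ℂ)*Complex.I*Complex.I + (1/8 : ℂ)*E*Complex.I + (1/8 : ℂ)*E*Complex.I*Complex.I*Complex.I + (1/8 : ℂ)*t*Complex.I*Complex.I*Complex.I + (-1/8 : ℂ)*t*E*Complex.I*Complex.I + (1/8 : ℂ)*t*t*E*Complex.I*Complex.I*Complex.I + (-1/4 : ℂ)*s*Complex.I + (-1/8 : ℂ)*s*Complex.I*Complex.I*Complex.I + (-1/8 : ℂ)*s*E + (3/8 : ℂ)*s*E*Complex.I*Complex.I + (-1/8 : ℂ)*s*t*Complex.I*Complex.I + (-1/8 : ℂ)*s*t*E*Complex.I*Complex.I*Complex.I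 + (1/8 : ℂ)*s*t*t*E*Complex.I*Complex.I) * ht + ((3/8 : ℂ) + (1/8 : ℂ)*E*Complex.I + (1/8 : ℂ)*t*Complex.I + (-1/8 : ℂ)*t*E + (-1/8 : ℂ)*s*Complex.I + (3/8 : ℂ)*s*E + (-1/8 : ℂ)*s*t + (-1/8 : ℂ)*s*t*E*Complex.I) * hI
    · linear_combination ((1/8 : ℂ)*t*Complex.I + (-1/8 : ℂ)*t*t*E*Complex.I + (-1/8 : ℂ)*t*t*t*Complex.I*Complex.I*Complex.I + (-1/4 : ℂ)*t*t*t*E*Complex.I*Complex.I + (-1/8 : ℂ)*t*t*t*t*E*Complex.I*Complex.I*Complex.I) * hs + ((-1/8 : ℂ)*Complex.I*Complex.I + (-1/8 : ℂ)*E*Complex.I + (-1/8 : ℂ)*E*Complex.I*Complex.I*Complex.I + (-1/8 : ℂ)*t*Complex.I*Complex.I*Complex.I + (-1/8 : ℂ)*t*E*Complex.I*Complex.I + (-1/8 : ℂ)*t*t*E*Complex.I*Complex.I*Complex.I + (1/8 : ℂ)*s*Complex.I*Complex.I*Complex.I + (-1/8 : ℂ)*s*E + (-1/8 : ℂ)*s*E*Complex.I*Complex.I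 + (1/8 : ℂ)*s*t*Complex.I*Complex.I + (-1/4 : ℂ)*s*t*E*Complex.I + (1/8 : ℂ)*s*t*E*Complex.I*Complex.I*Complex.I + (-1/8 : ℂ)*s*t*t*E*Complex.I*Complex.I) * ht + ((-1/8 : ℂ) + (-1/8 : ℂ)*E*Complex.I + (-1/8 : ℂ)*t*Complex.I + (-1/8 : ℂ)*t*E + (1/8 : ℂ)*s*Complex.I + (-1/8 : ℂ)*s*E + (-1/8 : ℂ)*s*t + (1/8 : ℂ)*s*t*E*Complex.I) * hI
    · linear_combination ((-1/2 : ℂ)*E*Complex.I + (-1/8 : ℂ)*t*Complex.I + (-1/4 : ℂ)*t*t*Complex.I*Complex.I + (1/8 : ℂ)*t*t*E*Complex.I + (-1/8 : ℂ)*t*t*t*Complex.I*Complex.I*Complex.I + (-1/8 : ℂ)*t*t*t*t*E*Complex.I*Complex.I*Complex.I) * hs + ((-1/8 : ℂ)*Complex.I*Complex.I + (3/8 : ℂ)*E*Complex.I + (-1/8 : ℂ)*E*Complex.I*Complex.I*Complex.I + (-1/8 : ℂ)*t*Complex.I*Complex.I*Complex.I + (-1/8 : ℂ)*t*E*Complex.I*Complex.I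 + (-1/8 : ℂ)*t*t*E*Complex.I*Complex.I*Complex.I + (-1/4 : ℂ)*s*Complex.I + (1/8 : ℂ)*s*Complex.I*Complex.I*Complex.I + (-1/8 : ℂ)*s*E + (-1/8 : ℂ)*s*E*Complex.I*Complex.I + (-1/8 : ℂ)*s*t*Complex.I*Complex.I + (1/8 : ℂ)*s*t*E*Complex.I*Complex.I*Complex.I + (1/8 : ℂ)*s*t*t*E*Complex.I*Complex.I) * ht + ((-1/8 : ℂ) + (-1/8 : ℂ)*E*Complex.I + (-1/8 : ℂ)*t*Complex.I + (-1/8 : ℂ)*t*E + (1/8 : ℂ)*s*Complex.I + (-1/8 : ℂ)*s*E + (-1/8 : ℂ)*s*t + (1/8 : ℂ)*s*t*E*Complex.I) * hI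
    · linear_combination ((-1/8 : ℂ)*t*Complex.I + (-1/2 : ℂ)*t*E*Complex.I*Complex.I + (1/8 : ℂ)*t*t*E*Complex.I + (1/8 : ℂ)*t*t*t*Complex.I*Complex.I*Complex.I + (1/4 : ℂ)*t*t*t*E*Complex.I*Complex.I + (1/8 : ℂ)*t*t*t*t*E*Complex.I*Complex.I*Complex.I) * hs + ((-1/8 : ℂ)*Complex.I*Complex.I + (1/8 : ℂ)*E*Complex.I + (1/8 : ℂ)*E*Complex.I*Complex.I*Complex.I + (1/8 : ℂ)*t*Complex.I*Complex.I*Complex.I + (3/8 : ℂ)*t*E*Complex.I*Complex.I + (1/8 : ℂ)*t*t*E*Complex.I*Complex.I*Complex.I + (-1/8 : ℂ)*s*Complex.I*Complex.I*Complex.I + (-1/8 : ℂ)*s*E + (-1/8 : ℂ)*s*E*Complex.I*Complex.I + (1/8 : ℂ)*s*t*Complex.I*Complex.I + (-1/4 : ℂ)*s*t*E*Complex.I + (-1/8 : ℂ)*s*t*E*Complex.I*Complex.I*Complex.I + (-1/8 : ℂ)*s*t*t*E*Complex.I*Complex.I) * ht + ((-1/8 : ℂ) + (1/8 : ℂ)*E*Complex.I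 + (1/8 : ℂ)*t*Complex.I + (-1/8 : ℂ)*t*E + (-1/8 : ℂ)*s*Complex.I + (-1/8 : ℂ)*s*E + (-1/8 : ℂ)*s*t + (-1/8 : ℂ)*s*t*E*Complex.I) * hI
end

section
/- Let m ≥ 1, let P₁, …, P_s be polynomials in m variables with complex coefficients, let x = (x₁, …, x_m) ∈ ℝ^m, and let n be a positive integer. Suppose that for every nonnegative integer k and every j ∈ {1, …, s}, P_j(e^{i(kn+1)x₁}, …, e^{i(kn+1)x_m}) = 0. Then there exist an m×m integer matrix A, a vector ℓ ∈ ℝ^m all of whose coordinates are rational multiples of π, and a point z₀ ∈ ℝ^m, such that x ≡ A·z₀ + ℓ componentwise modulo 2π, and for every z ∈ ℝ^m and every j, P_j(e^{i(A·z + ℓ)₁}, …, e^{i(A·z + ℓ)_m}) = 0. -/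
/-!
Write `P(e^{i(kn+1)x}) = ∑_u d_u f_u ^ k` over the monomials `u` of `P`, where
`d_u = c_u e^{i⟨u,x⟩}` and `f_u = e^{in⟨u,x⟩}`. Since this vanishes for every `k`, a Vandermonde
argument shows that `d` sums to zero over every fibre of `f`, and `f_u = f_{u'}` forces
`⟨u - u', x⟩ ∈ ℚπ`. Taking the `x_t` that form a maximal family independent over `ℚ` modulo `ℚπ`
and clearing denominators gives `x = A z₀ + ℓ` with `A` integral and `ℓ ∈ ℚπ`, where `A` is killed
by every integer relation among the `x_t` modulo `ℚπ`. So `⟨u, A(z - z₀)⟩` is constant on the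
fibres of `f`, and `P(e^{i(Az+ℓ)}) = ∑_u d_u e^{i⟨u, A(z - z₀)⟩}` vanishes fibre by fibre.
-/

open Finset Matrix Complex

theorem Finset.eq_zero_of_forall_sum_mul_pow_eq_zero {R : Type*} [CommRing R] [IsDomain R]
    {V : Finset R} {e : R → R} (h : ∀ k : ℕ, ∑ w ∈ V, e w * w ^ k = 0) :
    ∀ w ∈ V, e w = 0 := by
  set σ : Fin #V ≃ V := V.equivFin.symm
  have hv : (fun i => e (σ i)) = 0 := by
    refine Matrix.eq_zero_of_forall_pow_sum_mul_pow_eq_zero (f := fun i => (σ i : R))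
      (Subtype.val_injective.comp σ.injective) fun k => ?_
    rw [σ.sum_comp (fun w : V => e w * (w : R) ^ (k : ℕ))]
    exact (V.sum_coe_sort fun w => e w * w ^ (k : ℕ)).trans (h k)
  intro w hw
  simpa [σ] using congrFun hv (σ.symm ⟨w, hw⟩)

theorem Finset.sum_mul_eq_zero_of_forall_sum_mul_pow_eq_zero {ι R : Type*} [CommRing R]
    [IsDomain R] [DecidableEq R] {S : Finset ι} {d f h : ι → R}
    (hf : ∀ k : ℕ, ∑ u ∈ S, d u * f u ^ k = 0)
    (hh : ∀ u ∈ S, ∀ u' ∈ S, f u = f u' → h u = h u') :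
    ∑ u ∈ S, d u * h u = 0 := by
  have hmaps : ∀ u ∈ S, f u ∈ S.image f := fun u hu => mem_image_of_mem f hu
  have hfiber : ∀ w ∈ S.image f, ∑ u ∈ S with f u = w, d u = 0 := by
    refine eq_zero_of_forall_sum_mul_pow_eq_zero fun k => ?_
    rw [← hf k, ← sum_fiberwise_of_maps_to hmaps]
    refine sum_congr rfl fun w _ => ?_
    rw [sum_mul]
    exact sum_congr rfl fun u hu => by rw [(mem_filter.1 hu).2]
  rw [← sum_fiberwise_of_maps_to hmaps]
  refine sum_eq_zero fun w hw => ?_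
  obtain ⟨u₀, hu₀, rfl⟩ := mem_image.1 hw
  rw [sum_congr rfl fun u hu => by
    rw [hh u (mem_filter.1 hu).1 u₀ hu₀ (mem_filter.1 hu).2], ← sum_mul, hfiber _ hw, zero_mul]

theorem exists_matrix_sum_smul_eq_and_vecMul_eq_zero {ι K M : Type*} [Fintype ι] [Field K]
    [AddCommGroup M] [Module K M] (v : ι → M) :
    ∃ C : Matrix ι ι K, (∀ t, ∑ r, C t r • v r = v t) ∧
      ∀ δ : ι → K, ∑ t, δ t • v t = 0 → δ ᵥ* C = 0 := by
  obtain ⟨I, -, -, hspan, hI⟩ :=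
    exists_linearIndepOn_extension (linearIndepOn_empty K v) (Set.empty_subset Set.univ)
  have hmem : ∀ t, ∃ l ∈ Finsupp.supported K K I, Finsupp.linearCombination K v l = v t :=
    fun t => Finsupp.mem_span_image_iff_linearCombination K |>.1 (hspan ⟨t, trivial, rfl⟩)
  choose l hlI hl using hmem
  have hsum : ∀ c : ι →₀ K, Finsupp.linearCombination K v c = ∑ r, c r • v r := fun c =>
    (Finsupp.linearCombination_apply K c).trans (Finsupp.sum_fintype _ _ (by simp))
  refine ⟨fun t r => l t r, fun t => (hsum _).symm.trans (hl t), fun δ hδ => ?_⟩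
  have hcomb : ∑ t, δ t • l t = 0 := by
    refine linearIndepOn_iff.1 hI _ (sum_mem fun t _ => Submodule.smul_mem _ _ (hlI t)) ?_
    simp only [map_sum, map_smul, hl, hδ]
  ext r
  simpa [vecMul, dotProduct] using DFunLike.congr_fun hcomb r

theorem exists_int_matrix_eq_mulVec_add_mem {ι : Type*} [Fintype ι] (Q : Submodule ℚ ℝ)
    (x : ι → ℝ) :
    ∃ (A : Matrix ι ι ℤ) (z₀ ℓ : ι → ℝ), (∀ t, ℓ t ∈ Q) ∧
      (∀ t, x t = ∑ r, (A t r : ℝ) * z₀ r + ℓ t) ∧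
      ∀ δ : ι → ℤ, ∑ t, (δ t : ℝ) * x t ∈ Q → δ ᵥ* A = 0 := by
  obtain ⟨C, hCx, hCδ⟩ := exists_matrix_sum_smul_eq_and_vecMul_eq_zero (K := ℚ) (Q.mkQ ∘ x)
  obtain ⟨⟨b, hb⟩, hbC⟩ :=
    IsLocalization.exist_integer_multiples_of_finite (nonZeroDivisors ℤ) fun p : ι × ι => C p.1 p.2
  choose A hA using hbC
  have hb0 : (b : ℝ) ≠ 0 := Int.cast_ne_zero.2 (nonZeroDivisors.ne_zero hb)
  have hAC : ∀ t r, (A (t, r) : ℚ) = b * C t r := fun t r => by simpa using hA (t, r)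
  refine ⟨fun t r => A (t, r), fun r => (b : ℝ)⁻¹ * x r, fun t => x t - ∑ r, C t r • x r,
    fun t => ?_, fun t => ?_, fun δ hδ => ?_⟩
  · rw [← Submodule.Quotient.eq, ← Q.mkQ_apply, ← Q.mkQ_apply, map_sum]
    exact (hCx t).symm
  · have : ∀ r, (A (t, r) : ℝ) * ((b : ℝ)⁻¹ * x r) = C t r • x r := fun r => by
      rw [Rat.smul_def, ← Rat.cast_intCast, hAC]
      push_cast
      field_simp
    simp only [this]
    ring
  · have hδC : (fun t => (δ t : ℚ)) ᵥ* C = 0 := hCδ _ <| by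
      simp only [Function.comp_apply, ← map_smul, ← map_sum, Rat.smul_def, Rat.cast_intCast]
      exact (Submodule.Quotient.mk_eq_zero Q).2 hδ
    ext r
    have hr : ((∑ t, δ t * A (t, r) : ℤ) : ℚ) = b * ∑ t, (δ t : ℚ) * C t r := by
      push_cast [hAC, mul_sum]
      exact sum_congr rfl fun t _ => by ring
    have : ∑ t, (δ t : ℚ) * C t r = 0 := congrFun hδC r
    rw [this, mul_zero] at hr
    exact_mod_cast hr

theorem sum_intCast_mul_mulVec_eq_of_vecMul_eq {ι : Type*} [Fintype ι] {A : Matrix ι ι ℤ}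
    {a b : ι → ℤ} (h : a ᵥ* A = b ᵥ* A) (w : ι → ℝ) :
    ∑ t, (a t : ℝ) * ∑ r, (A t r : ℝ) * w r = ∑ t, (b t : ℝ) * ∑ r, (A t r : ℝ) * w r := by
  have key : ∀ c : ι → ℤ,
      ∑ t, (c t : ℝ) * ∑ r, (A t r : ℝ) * w r = ∑ r, ((c ᵥ* A) r : ℝ) * w r := fun c => by
    simp only [vecMul, dotProduct, Int.cast_sum, Int.cast_mul, mul_sum, sum_mul]
    rw [sum_comm]
    exact sum_congr rfl fun _ _ => sum_congr rfl fun _ _ => by ring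
  rw [key, key, h]

theorem MvPolynomial.eval_exp_I_mul {ι : Type*} [Fintype ι] (p : MvPolynomial ι ℂ)
    (y : ι → ℝ) :
    eval (fun t => exp (I * y t)) p =
      ∑ u ∈ p.support, p.coeff u * exp (I * ↑(∑ t, (u t : ℝ) * y t)) := by
  rw [MvPolynomial.eval_eq']
  refine sum_congr rfl fun u _ => ?_
  simp only [← exp_nat_mul, ← exp_sum, ofReal_sum, ofReal_mul, ofReal_natCast, mul_sum]
  congr 2
  exact sum_congr rfl fun t _ => by ring

theorem sub_mem_span_pi_of_exp_I_mul_eq {n : ℕ} (hn : n ≠ 0) {a b : ℝ}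
    (h : exp (I * ↑(n * a)) = exp (I * ↑(n * b))) : a - b ∈ Submodule.span ℚ {Real.pi} := by
  obtain ⟨k, hk⟩ := exp_eq_exp_iff_exists_int.1 h
  have hab : (n : ℝ) * a = n * b + 2 * Real.pi * k := by
    apply_fun (·.im) at hk
    simpa [mul_comm] using hk
  refine Submodule.mem_span_singleton.2 ⟨2 * k / n, ?_⟩
  rw [Rat.smul_def]
  push_cast
  field_simp
  linarith

theorem MvPolynomial.eval_exp_eq_zero_of_fiberwise {ι : Type*} [Fintype ι]
    {p : MvPolynomial ι ℂ} {x : ι → ℝ} (n : ℕ)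
    (hzero : ∀ k : ℕ, eval (fun t => exp (I * ↑((k * n + 1 : ℕ) * x t))) p = 0) (y : ι → ℝ)
    (hfiber : ∀ u ∈ p.support, ∀ u' ∈ p.support,
      exp (I * ↑(n * ∑ t, (u t : ℝ) * x t)) = exp (I * ↑(n * ∑ t, (u' t : ℝ) * x t)) →
        ∑ t, (u t : ℝ) * (y t - x t) = ∑ t, (u' t : ℝ) * (y t - x t)) :
    eval (fun t => exp (I * y t)) p = 0 := by
  classical
  have hsplit : ∀ u : ι →₀ ℕ, ∑ t, (u t : ℝ) * y t
      = ∑ t, (u t : ℝ) * x t + ∑ t, (u t : ℝ) * (y t - x t) := fun u => by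
    rw [← sum_add_distrib]; exact sum_congr rfl fun t _ => by ring
  have hpow : ∀ (k : ℕ) (u : ι →₀ ℕ), ∑ t, (u t : ℝ) * ((k * n + 1 : ℕ) * x t)
      = ∑ t, (u t : ℝ) * x t + k * (n * ∑ t, (u t : ℝ) * x t) := fun k u => by
    push_cast
    rw [mul_sum, mul_sum, ← sum_add_distrib]
    exact sum_congr rfl fun t _ => by ring
  rw [eval_exp_I_mul]
  calc ∑ u ∈ p.support, p.coeff u * exp (I * ↑(∑ t, (u t : ℝ) * y t))
      = ∑ u ∈ p.support, (p.coeff u * exp (I * ↑(∑ t, (u t : ℝ) * x t))) *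
          exp (I * ↑(∑ t, (u t : ℝ) * (y t - x t))) := sum_congr rfl fun u _ => by
        rw [hsplit, mul_assoc, ← exp_add]
        push_cast
        ring_nf
    _ = 0 := by
      refine sum_mul_eq_zero_of_forall_sum_mul_pow_eq_zero
        (f := fun u => exp (I * ↑(n * ∑ t, (u t : ℝ) * x t))) (fun k => ?_)
        fun u hu u' hu' huu' => by rw [hfiber u hu u' hu' huu']
      rw [← hzero k, eval_exp_I_mul]
      refine sum_congr rfl fun u _ => ?_
      rw [hpow, mul_assoc, ← exp_nat_mul, ← exp_add]
      push_cast
      ring_nf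

theorem rational_structure_of_zero_sets_general (m s : ℕ)
    (P : Fin s → MvPolynomial (Fin m) ℂ) (x : Fin m → ℝ) (n : ℕ) (hn : 0 < n)
    (hzero : ∀ (k : ℕ) (j : Fin s),
      MvPolynomial.eval
        (fun t => Complex.exp (Complex.I * (((k * n + 1 : ℕ) : ℂ) * (x t : ℂ)))) (P j) = 0) :
    ∃ (A : Matrix (Fin m) (Fin m) ℤ) (ℓ : Fin m → ℝ),
      (∀ j : Fin m, ∃ q : ℚ, ℓ j = (q : ℝ) * Real.pi) ∧
      (∃ z₀ : Fin m → ℝ, ∀ j : Fin m, ∃ c : ℤ,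
        x j - ((∑ r : Fin m, (A j r : ℝ) * z₀ r) + ℓ j) = 2 * Real.pi * c) ∧
      (∀ (z : Fin m → ℝ) (j : Fin s),
        MvPolynomial.eval
          (fun t => Complex.exp
            (Complex.I * ((((∑ r : Fin m, (A t r : ℝ) * z r) + ℓ t : ℝ)) : ℂ))) (P j) = 0) := by
  obtain ⟨A, z₀, ℓ, hℓ, hx, hA⟩ :=
    exists_int_matrix_eq_mulVec_add_mem (Submodule.span ℚ {Real.pi}) x
  refine ⟨A, ℓ, fun t => ?_, ⟨z₀, fun t => ⟨0, by rw [← hx t]; simp⟩⟩, fun z j => ?_⟩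
  · obtain ⟨q, hq⟩ := Submodule.mem_span_singleton.1 (hℓ t)
    exact ⟨q, by rw [← hq, Rat.smul_def]⟩
  refine MvPolynomial.eval_exp_eq_zero_of_fiberwise n (fun k => by simpa using hzero k j) _
    fun u _ u' _ huu' => ?_
  have hδ : (fun t => (u t : ℤ)) ᵥ* A = (fun t => (u' t : ℤ)) ᵥ* A := by
    rw [← sub_eq_zero, ← sub_vecMul]
    refine hA _ ?_
    convert sub_mem_span_pi_of_exp_I_mul_eq hn.ne' huu' using 1
    rw [← sum_sub_distrib]
    exact sum_congr rfl fun t _ => by simp only [Pi.sub_apply]; push_cast; ring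
  have hyx : ∀ t, ∑ r, (A t r : ℝ) * z r + ℓ t - x t = ∑ r, (A t r : ℝ) * (z r - z₀ r) := by
    intro t
    rw [hx t]
    simp only [mul_sub, sum_sub_distrib]
    ring
  simp only [hyx]
  exact_mod_cast sum_intCast_mul_mulVec_eq_of_vecMul_eq hδ (z - z₀)

theorem rational_structure_of_zero_sets (m s : ℕ) (hm : 1 ≤ m)
    (P : Fin s → MvPolynomial (Fin m) ℂ) (x : Fin m → ℝ) (n : ℕ) (hn : 0 < n)
    (hzero : ∀ (k : ℕ) (j : Fin s),
      MvPolynomial.eval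
        (fun t => Complex.exp (Complex.I * (((k * n + 1 : ℕ) : ℂ) * (x t : ℂ)))) (P j) = 0) :
    ∃ (A : Matrix (Fin m) (Fin m) ℤ) (ℓ : Fin m → ℝ),
      (∀ j : Fin m, ∃ q : ℚ, ℓ j = (q : ℝ) * Real.pi) ∧
      (∃ z₀ : Fin m → ℝ, ∀ j : Fin m, ∃ c : ℤ,
        x j - ((∑ r : Fin m, (A j r : ℝ) * z₀ r) + ℓ j) = 2 * Real.pi * c) ∧
      (∀ (z : Fin m → ℝ) (j : Fin s),
        MvPolynomial.eval
          (fun t => Complex.exp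
            (Complex.I * ((((∑ r : Fin m, (A t r : ℝ) * z r) + ℓ t : ℝ)) : ℂ))) (P j) = 0) :=
  rational_structure_of_zero_sets_general m s P x n hn hzero
end
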